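/- If I = (m, m+1, s, t) is a minimal normalized scheduling instance (n = m + 1 tasks on m processors), then its LPT approximation ratio satisfies ρ_I ≤ ρ_m. -/

import Mathlib

open Finset

/-- A scheduling instance on uniform processors: `m` processors with positive
speeds `s 1, …, s m`, and `n` tasks with positive sizes `t 1 ≥ … ≥ t n`
(tasks are given in non-increasing order of size, as assumed for LPT). -/
structure SchedInstance where
  m : ℕ
  n : ℕ
  s : ℕ → ℝ
  t : ℕ → ℝ
  hm : 1 ≤ m
  hn : 1 ≤ n
  hs : ∀ p, 1 ≤ p → p ≤ m → 0 < s p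
  ht : ∀ i, 1 ≤ i → i ≤ n → 0 < t i
  tsorted : ∀ i j, 1 ≤ i → i ≤ j → j ≤ n → t j ≤ t i

namespace SchedInstance

variable (I : SchedInstance)

/-- The set of processor indices `{1, …, m}`. -/
def procs : Finset ℕ := Finset.Icc 1 I.m

/-- The set of task indices `{1, …, n}`. -/
def tasks : Finset ℕ := Finset.Icc 1 I.n

lemma procs_nonempty : I.procs.Nonempty := Finset.nonempty_Icc.mpr I.hm

/-- A schedule assigns every task `i ∈ {1,…,n}` a processor `A i ∈ {1,…,m}`. -/
def IsSchedule (A : ℕ → ℕ) : Prop := ∀ i ∈ I.tasks, A i ∈ I.procs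

/-- Total size of the tasks assigned by `A` to processor `p`. -/
noncomputable def load (A : ℕ → ℕ) (p : ℕ) : ℝ :=
  ∑ i ∈ I.tasks.filter (fun i => A i = p), I.t i

/-- The makespan of a schedule `A` : the largest completion time
`(Σ_{A i = p} t i) / s p` over the processors `p`. -/
noncomputable def makespan (A : ℕ → ℕ) : ℝ :=
  I.procs.sup' I.procs_nonempty (fun p => I.load A p / I.s p)

/-- `OPT(I)`: the optimal (minimum) makespan over all schedules. -/
noncomputable def opt : ℝ := sInf {r | ∃ A, I.IsSchedule A ∧ I.makespan A = r}

/-- The completion time of processor `p` if task `i` is added to it while the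
current workloads are `w`. -/
noncomputable def cost (w : ℕ → ℝ) (i p : ℕ) : ℝ := (w p + I.t i) / I.s p

/-- The processor the LPT rule chooses for task `i` given current workloads `w` :
the smallest-index processor minimizing `(w p + t i) / s p`. -/
noncomputable def choose (w : ℕ → ℝ) (i : ℕ) : ℕ :=
  (I.procs.filter
    (fun p => I.cost w i p = I.procs.inf' I.procs_nonempty (I.cost w i))).min'
    (by
      obtain ⟨p, hp, hpe⟩ := Finset.exists_mem_eq_inf' I.procs_nonempty (I.cost w i)
      exact ⟨p, Finset.mem_filter.mpr ⟨hp, hpe.symm⟩⟩)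

/-- `lptW k p` : the workload of processor `p` after the LPT algorithm has
assigned tasks `1, …, k` (in this order). -/
noncomputable def lptW : ℕ → ℕ → ℝ
  | 0, _ => 0
  | (k + 1), p =>
      lptW k p + if I.choose (lptW k) (k + 1) = p ∧ k + 1 ≤ I.n then I.t (k + 1) else 0

/-- `A_I` : the LPT assignment; task `i` goes to the least-index processor
minimizing the resulting completion time, given the previous assignments. -/
noncomputable def lptA (i : ℕ) : ℕ := I.choose (I.lptW (i - 1)) i

/-- `LPT(I)` : the makespan of the LPT schedule. -/
noncomputable def lptTime : ℝ := I.makespan I.lptA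

/-- `ρ_I = LPT(I) / OPT(I)` : the approximation ratio of LPT on instance `I`. -/
noncomputable def ratio : ℝ := I.lptTime / I.opt

/-- `I` is normalized: `OPT(I) = 1`, speeds are non-increasing, and the
smallest task has size `t n = 1`. -/
def Normalized : Prop :=
  I.opt = 1 ∧ (∀ p q, 1 ≤ p → p ≤ q → q ≤ I.m → I.s q ≤ I.s p) ∧ I.t I.n = 1

/-- `I` is minimal: every strictly smaller instance has a strictly smaller
LPT approximation ratio. -/
def Minimal : Prop :=
  ∀ J : SchedInstance, J.m ≤ I.m → J.n ≤ I.n →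
    ¬(J.m = I.m ∧ J.n = I.n) → J.ratio < I.ratio

/-- `T_I(p)` : the tasks assigned to processor `p` by the LPT schedule. -/
noncomputable def T (p : ℕ) : Finset ℕ := I.tasks.filter (fun i => I.lptA i = p)

/-- `T'_I(p) = T_I(p) \ {n}` : the LPT tasks of `p`, without the last task. -/
noncomputable def T' (p : ℕ) : Finset ℕ := (I.T p).erase I.n

/-- `w'_I(p)` : the workload of `p` in the LPT schedule without the last task. -/
noncomputable def w' (p : ℕ) : ℝ := ∑ i ∈ I.T' p, I.t i

/-- `T*(p)` for a schedule `A` : the tasks assigned to processor `p` by `A`. -/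
noncomputable def Tstar (A : ℕ → ℕ) (p : ℕ) : Finset ℕ :=
  I.tasks.filter (fun i => A i = p)

/-- `w*(p)` for a schedule `A` : the workload of processor `p` under `A`. -/
noncomputable def wstar (A : ℕ → ℕ) (p : ℕ) : ℝ := ∑ i ∈ I.Tstar A p, I.t i

/-- `A` is an optimal schedule whose workloads satisfy `w*(1) ≥ … ≥ w*(m)`. -/
def IsSortedOptimal (A : ℕ → ℕ) : Prop :=
  I.IsSchedule A ∧ I.makespan A = I.opt ∧
    ∀ p q, 1 ≤ p → p ≤ q → q ≤ I.m → I.wstar A q ≤ I.wstar A p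

/-- Processor `p` dominates processor `q` (with respect to the optimal
schedule `A`): `s p ≤ s q` and there is `f : T*(q) → T'(p)` with
`t i ≥ Σ_{f j = i} t j` for every `i ∈ T'(p)`. -/
def Dominates (A : ℕ → ℕ) (p q : ℕ) : Prop :=
  I.s p ≤ I.s q ∧ ∃ f : ℕ → ℕ,
    (∀ j ∈ I.Tstar A q, f j ∈ I.T' p) ∧
    ∀ i ∈ I.T' p, (∑ j ∈ (I.Tstar A q).filter (fun j => f j = i), I.t j) ≤ I.t i

end SchedInstance

/-- The polynomial `P_m(x) = 2x^m − x^{m−1} − ⋯ − x − 2`. -/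
noncomputable def Pm (m : ℕ) (x : ℝ) : ℝ := 2 * x ^ m - (∑ k ∈ Finset.Ico 1 m, x ^ k) - 2

/-!
Write `c = LPT(I)`, which is `ρ_I` since `OPT(I) = 1`, and `w'(p)` for the load of `p` before
the last task. By minimality the last task determines the makespan, so `c · s(p) ≤ w'(p) + 1`
for every processor `p`. No processor is idle before the last task: otherwise, speeds being
sorted, the slowest one is idle, too slow for every task of an optimal schedule, and can be
deleted. So LPT puts exactly one of the first `m` tasks on each processor `p`, say `g(p)`.
For an optimal schedule `A` and `F = g ∘ A` this gives `c · t(i) ≤ t(F i) + 1`, and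
`c · (t(i) + t(j)) ≤ t(F i) + 1` when `i ≠ j` share a processor of `A`. The orbit of the last
task under `F` closes a cycle; the two predecessors of its entry point share a processor of `A`
and are joined by a path of length `k < m`. Chaining the inequalities along it gives
`P_{k+1}(c) ≤ 0`, hence `P_m(c) ≤ 0` and `c ≤ ρ_m`.
-/

lemma Pm_one (x : ℝ) : Pm 1 x = 2 * x - 2 := by
  simp [Pm]

lemma Pm_eq_geom_sum {m : ℕ} (hm : 1 ≤ m) (x : ℝ) :
    Pm m x = 2 * x ^ m - ∑ j ∈ range m, x ^ j - 1 := by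
  rw [Pm, range_eq_Ico, sum_eq_sum_Ico_succ_bot (by omega : 0 < m), pow_zero]
  ring

lemma Pm_succ {k : ℕ} (hk : 1 ≤ k) (x : ℝ) : Pm (k + 1) x = x * Pm k x + x - 2 := by
  rw [Pm_eq_geom_sum hk, Pm_eq_geom_sum (by omega), geom_sum_succ]
  ring

lemma Pm_pos_of_two_le {k : ℕ} (hk : 1 ≤ k) {x : ℝ} (hx : 2 ≤ x) : 0 < Pm k x := by
  induction k, hk using Nat.le_induction with
  | base => rw [Pm_one]; linarith
  | succ k hk ih => rw [Pm_succ hk]; nlinarith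

-- `P_{k+1}(x) = x P_k(x) + x - 2`, and `P_k(x) ≤ 0` forces `x < 2`.
lemma Pm_nonpos_of_le {k m : ℕ} (hk : 1 ≤ k) (hkm : k ≤ m) {x : ℝ} (hx : 0 ≤ x)
    (h : Pm k x ≤ 0) : Pm m x ≤ 0 := by
  have hx2 : x < 2 := by
    by_contra! hx2
    exact (Pm_pos_of_two_le hk hx2).not_ge h
  induction m, hkm using Nat.le_induction with
  | base => exact h
  | succ m hkm ih =>
    rw [Pm_succ (hk.trans hkm)]
    nlinarith [mul_nonpos_of_nonneg_of_nonpos hx ih]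

lemma le_of_Pm_nonpos {m : ℕ} (hm : 1 ≤ m) {x ρ : ℝ} (hρ : 0 < ρ) (hρroot : Pm m ρ = 0)
    (hx : Pm m x ≤ 0) : x ≤ ρ := by
  by_contra! hρx
  have hx0 : 0 < x := hρ.trans hρx
  have hterm : ∀ j ∈ Ico 1 m, ρ ^ m * x ^ j ≤ x ^ m * ρ ^ j := by
    intro j hj
    obtain ⟨i, rfl⟩ : ∃ i, m = j + i := ⟨m - j, by grind⟩
    have hi : ρ ^ i ≤ x ^ i := pow_le_pow_left₀ hρ.le hρx.le i
    calc ρ ^ (j + i) * x ^ j = (ρ ^ j * x ^ j) * ρ ^ i := by ring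
      _ ≤ (ρ ^ j * x ^ j) * x ^ i := by gcongr
      _ = x ^ (j + i) * ρ ^ j := by ring
  have hsum := sum_le_sum hterm
  rw [← mul_sum, ← mul_sum] at hsum
  have hpow : ρ ^ m < x ^ m := pow_lt_pow_left₀ hρx hρ.le (by omega)
  have hρm : 0 < ρ ^ m := by positivity
  rw [Pm] at hx hρroot
  nlinarith [mul_le_mul_of_nonneg_left hx hρm.le]

lemma Pm_succ_nonpos {c X Y Z : ℝ} {k : ℕ} (hc : 1 ≤ c) (hX : 1 ≤ X) (hZ : 1 ≤ Z)
    (hpath : c ^ k * Y ≤ X + ∑ j ∈ range k, c ^ j) (hcoll : c * (X + Z) ≤ Y + 1) :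
    Pm (k + 1) c ≤ 0 := by
  rw [Pm_eq_geom_sum (by omega), sum_range_succ, pow_succ]
  have hck : 1 ≤ c ^ k := one_le_pow₀ hc
  have hY : c ^ k * (c * X + c - 1) ≤ c ^ k * Y := by gcongr; nlinarith
  have hX' : 0 ≤ (X - 1) * (c ^ k * c - 1) := mul_nonneg (by linarith) (by nlinarith)
  nlinarith

lemma pow_mul_le_iterate_add_geom_sum {α : Type*} {f : α → α} {w : α → ℝ} {s : Set α}
    (hf : Set.MapsTo f s s) {c : ℝ} (hc : 0 ≤ c) (hstep : ∀ x ∈ s, c * w x ≤ w (f x) + 1)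
    {x : α} (hx : x ∈ s) (k : ℕ) : c ^ k * w x ≤ w (f^[k] x) + ∑ j ∈ range k, c ^ j := by
  induction k with
  | zero => simp
  | succ k ih =>
    rw [Function.iterate_succ_apply', geom_sum_succ, pow_succ']
    have := hstep _ (hf.iterate k hx)
    nlinarith [mul_le_mul_of_nonneg_left ih hc]

-- The orbit of `x₀` enters `s` and must close up; the two predecessors of its entry point
-- into the cycle give `x` and `y`.
lemma exists_ne_map_eq_and_iterate_eq {α : Type*} {s t : Finset α} {f : α → α} {x₀ : α}
    (hx₀t : x₀ ∈ t) (hx₀s : x₀ ∉ s) (hst : s ⊆ t) (hf : ∀ x ∈ t, f x ∈ s) :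
    ∃ x ∈ t, ∃ y ∈ t, x ≠ y ∧ f x = f y ∧ ∃ k < #s, f^[k] (f x) = y := by
  classical
  set u : ℕ → α := fun r => f^[r] x₀
  have hu_succ (r : ℕ) : u (r + 1) = f (u r) := Function.iterate_succ_apply' f r x₀
  have hu_s (r : ℕ) : u (r + 1) ∈ s := by
    induction r with
    | zero => exact hf x₀ hx₀t
    | succ r ih => rw [hu_succ]; exact hf _ (hst ih)
  have hu_t (r : ℕ) : u r ∈ t := by
    cases r
    exacts [hx₀t, hst (hu_s _)]
  have hrep : ∃ b ≤ #s + 1, ∃ a < b, u a = u b := by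
    obtain ⟨r₁, hr₁, r₂, hr₂, hne, heq⟩ :=
      exists_ne_map_eq_of_card_lt_of_maps_to (s := Icc 1 (#s + 1)) (t := s) (f := u)
        (by simp) (fun r hr => by
          obtain ⟨r, rfl⟩ : ∃ r', r = r' + 1 := ⟨r - 1, by grind [coe_Icc]⟩
          exact hu_s r)
    simp only [mem_Icc] at hr₁ hr₂
    rcases lt_or_gt_of_ne hne with h | h
    exacts [⟨r₂, hr₂.2, r₁, h, heq⟩, ⟨r₁, hr₁.2, r₂, h, heq.symm⟩]
  have hP : ∃ b, ∃ a < b, u a = u b := hrep.imp fun _ h => h.2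
  set b := Nat.find hP
  have hb : b ≤ #s + 1 := by
    obtain ⟨b₀, hb₀, hP₀⟩ := hrep
    exact (Nat.find_min' hP hP₀).trans hb₀
  obtain ⟨a, hab, hua⟩ : ∃ a < b, u a = u b := Nat.find_spec hP
  have ha : 1 ≤ a := by
    rcases a with _ | a
    · obtain ⟨b', hb'⟩ : ∃ b', b = b' + 1 := ⟨b - 1, by omega⟩
      rw [hb'] at hua
      exact absurd (hua ▸ hu_s b' : u 0 ∈ s) hx₀s
    · omega
  refine ⟨u (a - 1), hu_t _, u (b - 1), hu_t _, fun h => ?_, ?_, b - 1 - a, by omega, ?_⟩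
  · exact Nat.find_min hP (show b - 1 < b by omega) ⟨a - 1, by omega, h⟩
  · rw [← hu_succ, ← hu_succ, Nat.sub_add_cancel ha, Nat.sub_add_cancel (by omega), hua]
  · rw [← hu_succ, Nat.sub_add_cancel ha]
    simp only [u, ← Function.iterate_add_apply]
    congr 1
    omega

namespace SchedInstance

variable (I : SchedInstance)

lemma s_pos {p : ℕ} (hp : p ∈ I.procs) : 0 < I.s p := by
  rw [procs, mem_Icc] at hp
  exact I.hs p hp.1 hp.2

lemma t_pos {i : ℕ} (hi : i ∈ I.tasks) : 0 < I.t i := by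
  rw [tasks, mem_Icc] at hi
  exact I.ht i hi.1 hi.2

lemma t_last_le {i : ℕ} (hi : i ∈ I.tasks) : I.t I.n ≤ I.t i := by
  rw [tasks, mem_Icc] at hi
  exact I.tsorted i I.n hi.1 hi.2 le_rfl

lemma last_mem_tasks : I.n ∈ I.tasks := mem_Icc.mpr ⟨I.hn, le_rfl⟩

lemma load_congr {A B : ℕ → ℕ} (h : ∀ i ∈ I.tasks, A i = B i) (p : ℕ) :
    I.load A p = I.load B p := by
  rw [load, load, filter_congr fun i hi => by rw [h i hi]]

lemma makespan_congr {A B : ℕ → ℕ} (h : ∀ i ∈ I.tasks, A i = B i) :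
    I.makespan A = I.makespan B := by
  simp only [makespan, I.load_congr h]

lemma load_nonneg (A : ℕ → ℕ) (p : ℕ) : 0 ≤ I.load A p :=
  sum_nonneg fun _ hi => (I.t_pos (mem_filter.mp hi).1).le

lemma load_div_le_makespan (A : ℕ → ℕ) {p : ℕ} (hp : p ∈ I.procs) :
    I.load A p / I.s p ≤ I.makespan A :=
  le_sup' (fun q => I.load A q / I.s q) hp

lemma load_le_makespan_mul (A : ℕ → ℕ) {p : ℕ} (hp : p ∈ I.procs) :
    I.load A p ≤ I.makespan A * I.s p :=
  (div_le_iff₀ (I.s_pos hp)).mp (I.load_div_le_makespan A hp)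

lemma makespan_nonneg (A : ℕ → ℕ) : 0 ≤ I.makespan A := by
  obtain ⟨p, hp⟩ := I.procs_nonempty
  exact (div_nonneg (I.load_nonneg A p) (I.s_pos hp).le).trans (I.load_div_le_makespan A hp)

lemma t_le_load (A : ℕ → ℕ) {i : ℕ} (hi : i ∈ I.tasks) : I.t i ≤ I.load A (A i) :=
  single_le_sum (fun _ hj => (I.t_pos (mem_filter.mp hj).1).le) (mem_filter.mpr ⟨hi, rfl⟩)

lemma t_add_t_le_load (A : ℕ → ℕ) {i j : ℕ} (hi : i ∈ I.tasks) (hj : j ∈ I.tasks) (hij : i ≠ j)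
    (hA : A i = A j) : I.t i + I.t j ≤ I.load A (A i) := by
  rw [← sum_pair hij]
  refine sum_le_sum_of_subset_of_nonneg ?_ fun x hx _ => (I.t_pos (mem_filter.mp hx).1).le
  intro x hx
  rcases mem_insert.mp hx with rfl | hx
  · exact mem_filter.mpr ⟨hi, rfl⟩
  rw [mem_singleton.mp hx]
  exact mem_filter.mpr ⟨hj, hA.symm⟩

lemma finite_makespans : {r | ∃ A, I.IsSchedule A ∧ I.makespan A = r}.Finite := by
  classical
  let extend : ((i : I.tasks) → I.procs) → ℕ → ℕ :=
    fun g i => if h : i ∈ I.tasks then g ⟨i, h⟩ else 1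
  refine (Set.finite_range (I.makespan ∘ extend)).subset ?_
  rintro r ⟨A, hA, rfl⟩
  exact Set.mem_range.mpr
    ⟨fun i => ⟨A i, hA i i.2⟩, I.makespan_congr fun i hi => by simp [extend, hi]⟩

lemma exists_makespan_eq_opt : ∃ A, I.IsSchedule A ∧ I.makespan A = I.opt := by
  have hne : {r | ∃ A, I.IsSchedule A ∧ I.makespan A = r}.Nonempty :=
    ⟨_, fun _ => 1, fun _ _ => mem_Icc.mpr ⟨le_rfl, I.hm⟩, rfl⟩
  exact hne.csInf_mem I.finite_makespans

lemma opt_le_makespan {A : ℕ → ℕ} (hA : I.IsSchedule A) : I.opt ≤ I.makespan A :=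
  csInf_le ⟨0, by rintro r ⟨B, -, rfl⟩; exact I.makespan_nonneg B⟩ ⟨A, hA, rfl⟩

lemma opt_pos : 0 < I.opt := by
  obtain ⟨A, hA, hAopt⟩ := I.exists_makespan_eq_opt
  have hn := I.last_mem_tasks
  have hs := I.s_pos (hA _ hn)
  rw [← hAopt]
  calc 0 < I.t I.n / I.s (A I.n) := div_pos (I.t_pos hn) hs
    _ ≤ I.load A (A I.n) / I.s (A I.n) := by gcongr; exact I.t_le_load A hn
    _ ≤ I.makespan A := I.load_div_le_makespan A (hA _ hn)

lemma Minimal.lptTime_lt_of_opt_le {I : SchedInstance} (hmin : I.Minimal) {J : SchedInstance}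
    (hm : J.m ≤ I.m) (hn : J.n ≤ I.n) (hne : ¬(J.m = I.m ∧ J.n = I.n)) (hopt : J.opt ≤ I.opt) :
    J.lptTime < I.lptTime := by
  by_contra! h
  exact (hmin J hm hn hne).not_ge (div_le_div₀ (J.makespan_nonneg _) h J.opt_pos hopt)

lemma choose_mem_filter (w : ℕ → ℝ) (i : ℕ) :
    I.choose w i ∈ I.procs.filter
      (fun p => I.cost w i p = I.procs.inf' I.procs_nonempty (I.cost w i)) :=
  min'_mem _ _

lemma choose_mem (w : ℕ → ℝ) (i : ℕ) : I.choose w i ∈ I.procs :=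
  (mem_filter.mp (I.choose_mem_filter w i)).1

lemma cost_choose_le (w : ℕ → ℝ) (i : ℕ) {p : ℕ} (hp : p ∈ I.procs) :
    I.cost w i (I.choose w i) ≤ I.cost w i p := by
  rw [(mem_filter.mp (I.choose_mem_filter w i)).2]
  exact inf'_le _ hp

lemma choose_le_of_cost_le (w : ℕ → ℝ) (i : ℕ) {p : ℕ} (hp : p ∈ I.procs)
    (h : I.cost w i p ≤ I.cost w i (I.choose w i)) : I.choose w i ≤ p := by
  have hmin := (mem_filter.mp (I.choose_mem_filter w i)).2
  exact min'_le _ _ (mem_filter.mpr ⟨hp, (h.trans hmin.le).antisymm (inf'_le _ hp)⟩)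

lemma lptA_succ (k : ℕ) : I.lptA (k + 1) = I.choose (I.lptW k) (k + 1) := rfl

lemma lptA_mem (i : ℕ) : I.lptA i ∈ I.procs := I.choose_mem _ _

lemma lptW_succ {k : ℕ} (hk : k + 1 ≤ I.n) (p : ℕ) :
    I.lptW (k + 1) p = I.lptW k p + if I.lptA (k + 1) = p then I.t (k + 1) else 0 := by
  rw [lptW, lptA_succ]
  exact congrArg _ (if_congr (and_iff_left hk) rfl rfl)

lemma lptW_eq_sum {k : ℕ} (hk : k ≤ I.n) (p : ℕ) :
    I.lptW k p = ∑ i ∈ (Icc 1 k).filter (I.lptA · = p), I.t i := by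
  rw [sum_filter]
  induction k with
  | zero => simp [lptW]
  | succ k ih => rw [I.lptW_succ hk, ih (by omega), sum_Icc_succ_top (by omega)]

lemma load_lptA (p : ℕ) : I.load I.lptA p = I.lptW I.n p :=
  (I.lptW_eq_sum le_rfl p).symm

lemma lptW_nonneg {k : ℕ} (hk : k ≤ I.n) (p : ℕ) : 0 ≤ I.lptW k p := by
  rw [I.lptW_eq_sum hk]
  exact sum_nonneg fun i hi => (I.t_pos (Icc_subset_Icc_right hk (mem_filter.mp hi).1)).le

lemma lptW_mono {k l : ℕ} (hkl : k ≤ l) (hl : l ≤ I.n) (p : ℕ) : I.lptW k p ≤ I.lptW l p := by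
  rw [I.lptW_eq_sum (hkl.trans hl), I.lptW_eq_sum hl]
  exact sum_le_sum_of_subset_of_nonneg (filter_subset_filter _ (Icc_subset_Icc_right hkl))
    fun i hi _ => (I.t_pos (Icc_subset_Icc_right hl (mem_filter.mp hi).1)).le

lemma lptW_lptA_pos {j k : ℕ} (hj : 1 ≤ j) (hjk : j ≤ k) (hk : k ≤ I.n) :
    0 < I.lptW k (I.lptA j) := by
  rw [I.lptW_eq_sum hk]
  exact sum_pos' (fun i hi => (I.t_pos (Icc_subset_Icc_right hk (mem_filter.mp hi).1)).le)
    ⟨j, mem_filter.mpr ⟨mem_Icc.mpr ⟨hj, hjk⟩, rfl⟩, I.t_pos (mem_Icc.mpr ⟨hj, hjk.trans hk⟩)⟩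

lemma exists_lptA_eq_of_lptW_pos {k p : ℕ} (hk : k ≤ I.n) (h : 0 < I.lptW k p) :
    ∃ j ∈ Icc 1 k, I.lptA j = p := by
  rw [I.lptW_eq_sum hk] at h
  obtain ⟨j, hj, -⟩ := exists_ne_zero_of_sum_ne_zero h.ne'
  exact ⟨j, mem_filter.mp hj⟩

lemma load_lptA_eq (p : ℕ) :
    I.load I.lptA p = I.lptW (I.n - 1) p + if I.lptA I.n = p then I.t I.n else 0 := by
  obtain ⟨k, hk⟩ : ∃ k, I.n = k + 1 := ⟨I.n - 1, by have := I.hn; omega⟩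
  rw [load_lptA, hk, Nat.add_sub_cancel, I.lptW_succ hk.ge]

lemma cost_last_le_lptTime : I.cost (I.lptW (I.n - 1)) I.n (I.lptA I.n) ≤ I.lptTime := by
  have h := I.load_div_le_makespan I.lptA (I.lptA_mem I.n)
  rwa [load_lptA_eq, if_pos rfl] at h

-- With sorted speeds an idle processor `p` beats every slower one, so LPT fills processors
-- in index order.
lemma lptW_pos_of_lt_lptA (hs : ∀ p q, 1 ≤ p → p ≤ q → q ≤ I.m → I.s q ≤ I.s p) {j p : ℕ}
    (hj : j ∈ I.tasks) (hp : 1 ≤ p) (hpj : p < I.lptA j) : 0 < I.lptW (j - 1) p := by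
  have hj' := mem_Icc.mp hj
  have hq := mem_Icc.mp (I.lptA_mem j)
  have hpm : p ∈ I.procs := mem_Icc.mpr ⟨hp, by omega⟩
  refine (I.lptW_nonneg (by omega) p).lt_of_ne' fun h0 => hpj.not_ge ?_
  refine I.choose_le_of_cost_le _ _ hpm ?_
  change (I.lptW (j - 1) p + I.t j) / I.s p ≤
    (I.lptW (j - 1) (I.lptA j) + I.t j) / I.s (I.lptA j)
  rw [h0, zero_add]
  calc I.t j / I.s p ≤ I.t j / I.s (I.lptA j) :=
        div_le_div_of_nonneg_left (I.t_pos hj).le (I.s_pos (I.lptA_mem j))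
          (hs p _ hp hpj.le hq.2)
    _ ≤ _ := by
        gcongr
        exacts [(I.s_pos (I.lptA_mem j)).le, le_add_of_nonneg_left (I.lptW_nonneg (by omega) _)]

lemma lptW_eq_zero_of_le (hs : ∀ p q, 1 ≤ p → p ≤ q → q ≤ I.m → I.s q ≤ I.s p) {k p q : ℕ}
    (hk : k ≤ I.n) (hp : 1 ≤ p) (hpq : p ≤ q) (h : I.lptW k p = 0) : I.lptW k q = 0 := by
  refine ((I.lptW_nonneg hk q).eq_or_lt.resolve_right fun hpos => ?_).symm
  obtain ⟨j, hj, rfl⟩ := I.exists_lptA_eq_of_lptW_pos hk hpos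
  have hj' := mem_Icc.mp hj
  rcases hpq.eq_or_lt with rfl | hlt
  · exact hpos.ne' h
  · have := (I.lptW_pos_of_lt_lptA hs (mem_Icc.mpr ⟨hj'.1, by omega⟩) hp hlt).trans_le
      (I.lptW_mono (by omega) hk p)
    exact this.ne' h

def restrict (m' n' : ℕ) (h1m : 1 ≤ m') (hm : m' ≤ I.m) (h1n : 1 ≤ n')
    (hn : n' ≤ I.n) : SchedInstance where
  m := m'
  n := n'
  s := I.s
  t := I.t
  hm := h1m
  hn := h1n
  hs p hp1 hp := I.hs p hp1 (hp.trans hm)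
  ht i hi1 hi := I.ht i hi1 (hi.trans hn)
  tsorted i j hi hij hj := I.tsorted i j hi hij (hj.trans hn)

section Restrict

variable {I} {m' n' : ℕ} (h1m : 1 ≤ m') (hm : m' ≤ I.m) (h1n : 1 ≤ n')
  (hn : n' ≤ I.n)

lemma restrict_choose {w : ℕ → ℝ} {i : ℕ} (h : I.choose w i ≤ m') :
    (I.restrict m' n' h1m hm h1n hn).choose w i = I.choose w i := by
  set J := I.restrict m' n' h1m hm h1n hn
  have hqJ : I.choose w i ∈ J.procs := mem_Icc.mpr ⟨(mem_Icc.mp (I.choose_mem w i)).1, h⟩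
  have hq'I : J.choose w i ∈ I.procs := Icc_subset_Icc_right hm (J.choose_mem w i)
  have h1 : I.cost w i (J.choose w i) ≤ I.cost w i (I.choose w i) := J.cost_choose_le w i hqJ
  have h2 : I.cost w i (I.choose w i) ≤ I.cost w i (J.choose w i) := I.cost_choose_le w i hq'I
  exact le_antisymm (J.choose_le_of_cost_le w i hqJ h2) (I.choose_le_of_cost_le w i hq'I h1)

lemma restrict_lptW {k : ℕ} (hk : k ≤ n') (hA : ∀ j ∈ Icc 1 k, I.lptA j ≤ m') :
    (I.restrict m' n' h1m hm h1n hn).lptW k = I.lptW k := by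
  induction k with
  | zero => rfl
  | succ k ih =>
    have hW := ih (by omega) fun j hj => hA j (Icc_subset_Icc_right (by omega) hj)
    funext p
    rw [(I.restrict m' n' h1m hm h1n hn).lptW_succ hk, I.lptW_succ (hk.trans hn), lptA_succ,
      lptA_succ, hW, restrict_choose (w := I.lptW k) h1m hm h1n hn
        (hA (k + 1) (mem_Icc.mpr ⟨by omega, le_rfl⟩))]
    rfl

lemma opt_restrict_le {A : ℕ → ℕ} (hA : I.IsSchedule A) (hAm : ∀ i ∈ Icc 1 n', A i ≤ m') :
    (I.restrict m' n' h1m hm h1n hn).opt ≤ I.makespan A := by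
  set J := I.restrict m' n' h1m hm h1n hn
  have hJA : J.IsSchedule A := fun i hi =>
    mem_Icc.mpr ⟨(mem_Icc.mp (hA i (Icc_subset_Icc_right hn hi))).1, hAm i hi⟩
  refine (J.opt_le_makespan hJA).trans (sup'_le _ _ fun p hp => ?_)
  have hpI : p ∈ I.procs := Icc_subset_Icc_right hm hp
  refine le_trans ?_ (I.load_div_le_makespan A hpI)
  exact div_le_div_of_nonneg_right (sum_le_sum_of_subset_of_nonneg
    (filter_subset_filter _ (Icc_subset_Icc_right hn))
    fun i hi _ => (I.t_pos (mem_filter.mp hi).1).le) (I.s_pos hpI).le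

end Restrict

variable {I}

-- Otherwise the makespan is reached without the last task, and dropping that task keeps
-- `LPT` and does not increase `OPT`.
lemma lptTime_le_cost_last (hmin : I.Minimal) (hn : 2 ≤ I.n) {p : ℕ} (hp : p ∈ I.procs) :
    I.lptTime ≤ I.cost (I.lptW (I.n - 1)) I.n p := by
  set J := I.restrict I.m (I.n - 1) I.hm le_rfl (by omega) (Nat.sub_le _ _)
  have hJW : J.lptW (I.n - 1) = I.lptW (I.n - 1) :=
    restrict_lptW _ _ _ _ le_rfl fun j _ => (mem_Icc.mp (I.lptA_mem j)).2
  by_contra! hlt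
  obtain ⟨r, hr, hrmax⟩ := exists_mem_eq_sup' I.procs_nonempty fun q => I.load I.lptA q / I.s q
  have hrq : I.lptA I.n ≠ r := by
    rintro rfl
    have h := (I.cost_choose_le _ _ hp).trans_lt hlt
    rw [lptTime, makespan, hrmax, load_lptA_eq, if_pos rfl] at h
    exact lt_irrefl _ h
  have hJ : I.lptTime ≤ J.lptTime :=
    calc I.lptTime = I.load I.lptA r / I.s r := hrmax
      _ = J.load J.lptA r / J.s r := by
          rw [I.load_lptA_eq, if_neg hrq, add_zero, J.load_lptA, ← hJW]; rfl
      _ ≤ J.lptTime := J.load_div_le_makespan _ hr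
  obtain ⟨A, hA, hAopt⟩ := I.exists_makespan_eq_opt
  have hJopt : J.opt ≤ I.opt :=
    hAopt ▸ opt_restrict_le _ _ _ _ hA fun i hi =>
      (mem_Icc.mp (hA i (Icc_subset_Icc_right (Nat.sub_le _ _) hi))).2
  have := hmin.lptTime_lt_of_opt_le (J := J) le_rfl (Nat.sub_le _ _)
    (fun h => by have := h.2; change I.n - 1 = I.n at this; omega) hJopt
  linarith

lemma ne_of_opt_mul_s_lt {A : ℕ → ℕ} (hA : I.IsSchedule A) (hAopt : I.makespan A = I.opt)
    {p : ℕ} (hp : I.opt * I.s p < I.t I.n) {i : ℕ} (hi : i ∈ I.tasks) : A i ≠ p := by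
  rintro rfl
  have := (I.t_le_load A hi).trans (I.load_le_makespan_mul A (hA i hi))
  rw [hAopt] at this
  linarith [I.t_last_le hi]

lemma lptTime_le_restrict_pred (hmin : I.Minimal) (hn : 2 ≤ I.n) (hm : 2 ≤ I.m)
    (hlpt : ∀ j ∈ Icc 1 (I.n - 1), I.lptA j ≤ I.m - 1) :
    I.lptTime ≤ (I.restrict (I.m - 1) I.n (by omega) (Nat.sub_le _ _) I.hn le_rfl).lptTime := by
  set J := I.restrict (I.m - 1) I.n (by omega) (Nat.sub_le _ _) I.hn le_rfl
  have hJW : J.lptW (I.n - 1) = I.lptW (I.n - 1) := restrict_lptW _ _ _ _ (Nat.sub_le _ _) hlpt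
  calc I.lptTime ≤ I.cost (I.lptW (I.n - 1)) I.n (J.lptA I.n) :=
        lptTime_le_cost_last hmin hn (Icc_subset_Icc_right (Nat.sub_le _ _) (J.lptA_mem _))
    _ = J.cost (J.lptW (J.n - 1)) J.n (J.lptA J.n) := by rw [← hJW]; rfl
    _ ≤ J.lptTime := J.cost_last_le_lptTime

-- If the slowest processor were idle before the last task, it would also be useless to an
-- optimal schedule, and deleting it would keep `LPT`.
lemma lptW_last_proc_pos (hmin : I.Minimal) (hn : 2 ≤ I.n) (hopt : I.opt < I.lptTime) :
    0 < I.lptW (I.n - 1) I.m := by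
  have hmI : I.m ∈ I.procs := mem_Icc.mpr ⟨I.hm, le_rfl⟩
  refine (I.lptW_nonneg (Nat.sub_le _ _) _).lt_of_ne' fun h0 => ?_
  have hlpt : ∀ j ∈ Icc 1 (I.n - 1), I.lptA j ≤ I.m - 1 := by
    intro j hj
    have hpos := I.lptW_lptA_pos (mem_Icc.mp hj).1 (mem_Icc.mp hj).2 (Nat.sub_le _ _)
    have hne : I.lptA j ≠ I.m := fun h => hpos.ne' (h ▸ h0)
    have := (mem_Icc.mp (I.lptA_mem j)).2
    omega
  have hm : 2 ≤ I.m := by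
    have := hlpt 1 (mem_Icc.mpr ⟨le_rfl, by omega⟩)
    have := (mem_Icc.mp (I.lptA_mem 1)).1
    omega
  have hslow : I.opt * I.s I.m < I.t I.n := by
    have h := lptTime_le_cost_last hmin hn hmI
    rw [cost, h0, zero_add, le_div_iff₀ (I.s_pos hmI)] at h
    exact (mul_lt_mul_of_pos_right hopt (I.s_pos hmI)).trans_le h
  obtain ⟨A, hA, hAopt⟩ := I.exists_makespan_eq_opt
  have hAm : ∀ i ∈ Icc 1 I.n, A i ≤ I.m - 1 := fun i hi => by
    have := ne_of_opt_mul_s_lt hA hAopt hslow hi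
    have := (mem_Icc.mp (hA i hi)).2
    omega
  have := hmin.lptTime_lt_of_opt_le
    (J := I.restrict (I.m - 1) I.n (by omega) (Nat.sub_le _ _) I.hn le_rfl) (Nat.sub_le _ _) le_rfl
    (fun h => by have := h.1; change I.m - 1 = I.m at this; omega)
    (hAopt ▸ opt_restrict_le _ _ _ _ hA hAm)
  linarith [lptTime_le_restrict_pred hmin hn hm hlpt]

lemma lptW_pos_of_minimal (hmin : I.Minimal)
    (hs : ∀ p q, 1 ≤ p → p ≤ q → q ≤ I.m → I.s q ≤ I.s p) (hn : 2 ≤ I.n)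
    (hopt : I.opt < I.lptTime) {p : ℕ} (hp : p ∈ I.procs) : 0 < I.lptW (I.n - 1) p :=
  (I.lptW_nonneg (Nat.sub_le _ _) p).lt_of_ne' fun h0 =>
    (lptW_last_proc_pos hmin hn hopt).ne'
      (I.lptW_eq_zero_of_le hs (Nat.sub_le _ _) (mem_Icc.mp hp).1 (mem_Icc.mp hp).2 h0)

variable (I)

lemma exists_lptA_inverse (hn : I.n = I.m + 1) (hpos : ∀ p ∈ I.procs, 0 < I.lptW I.m p) :
    ∃ g : ℕ → ℕ, ∀ p ∈ I.procs,
      g p ∈ Icc 1 I.m ∧ I.lptA (g p) = p ∧ I.lptW I.m p = I.t (g p) := by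
  have hm : I.m ≤ I.n := by omega
  have hsurj : ∀ p ∈ I.procs, ∃ j ∈ Icc 1 I.m, I.lptA j = p :=
    fun p hp => I.exists_lptA_eq_of_lptW_pos hm (hpos p hp)
  have hinj := inj_on_of_surj_on_of_card_le (s := Icc 1 I.m) (t := I.procs)
    (fun j _ => I.lptA j) (fun j _ => I.lptA_mem j)
    (fun p hp => let ⟨j, hj, h⟩ := hsurj p hp; ⟨j, hj, h⟩) le_rfl
  choose! g hg using hsurj
  refine ⟨g, fun p hp => ⟨(hg p hp).1, (hg p hp).2, ?_⟩⟩
  have hfib : (Icc 1 I.m).filter (I.lptA · = p) = {g p} := by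
    refine eq_singleton_iff_unique_mem.mpr ⟨mem_filter.mpr (hg p hp), fun j hj => ?_⟩
    exact hinj (mem_filter.mp hj).1 (hg p hp).1 ((mem_filter.mp hj).2.trans (hg p hp).2.symm)
  rw [I.lptW_eq_sum hm, hfib, sum_singleton]

lemma exists_Pm_nonpos (hn : I.n = I.m + 1) (hopt : I.opt = 1) (htn : I.t I.n = 1)
    (hc : 1 ≤ I.lptTime) (hcost : ∀ p ∈ I.procs, I.lptTime * I.s p ≤ I.lptW I.m p + 1)
    (hpos : ∀ p ∈ I.procs, 0 < I.lptW I.m p) :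
    ∃ k, 1 ≤ k ∧ k ≤ I.m ∧ Pm k I.lptTime ≤ 0 := by
  set c := I.lptTime
  obtain ⟨g, hg⟩ := I.exists_lptA_inverse hn hpos
  obtain ⟨A, hA, hAopt⟩ := I.exists_makespan_eq_opt
  have hS : Icc 1 I.m ⊆ I.tasks := Icc_subset_Icc_right (by omega)
  have ht1 (i : ℕ) (hi : i ∈ I.tasks) : 1 ≤ I.t i := htn ▸ I.t_last_le hi
  have hload (p : ℕ) (hp : p ∈ I.procs) : c * I.load A p ≤ I.t (g p) + 1 := by
    have := I.load_le_makespan_mul A hp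
    rw [hAopt, hopt, one_mul] at this
    rw [← (hg p hp).2.2]
    exact (mul_le_mul_of_nonneg_left this (by linarith)).trans (hcost p hp)
  -- `g (A i)` is the task that `LPT` placed alone on the processor serving `i` in `A`.
  obtain ⟨x, hx, y, hy, hxy, hFxy, k, hk, hky⟩ :=
    exists_ne_map_eq_and_iterate_eq (f := g ∘ A) (s := Icc 1 I.m) I.last_mem_tasks
      (by simp [hn]) hS fun i hi => (hg _ (hA i hi)).1
  have hAxy : A x = A y := by
    rw [← (hg _ (hA x hx)).2.1, ← (hg _ (hA y hy)).2.1]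
    exact congrArg I.lptA hFxy
  have hpath := pow_mul_le_iterate_add_geom_sum (s := (I.tasks : Set ℕ)) (f := g ∘ A)
    (fun i hi => hS (hg _ (hA i hi)).1) (by linarith)
    (fun i hi => (mul_le_mul_of_nonneg_left (I.t_le_load A hi) (by linarith)).trans
      (hload _ (hA i hi)))
    (hS (hg _ (hA x hx)).1) k
  rw [show (g ∘ A)^[k] (g (A x)) = y from hky] at hpath
  rw [Nat.card_Icc] at hk
  refine ⟨k + 1, by omega, by omega, Pm_succ_nonpos hc (ht1 y hy) (ht1 x hx) hpath ?_⟩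
  rw [add_comm]
  exact (mul_le_mul_of_nonneg_left (I.t_add_t_le_load A hx hy hxy hAxy) (by linarith)).trans
    (hload _ (hA x hx))

end SchedInstance

/-- If `I = (m, m+1, s, t)` is a minimal normalized instance, then its LPT
approximation ratio is at most `ρ_m`, the unique positive root of `P_m`. -/
theorem ratio_le_rho_of_minimal_m_add_one (I : SchedInstance) (hn : I.n = I.m + 1)
    (hnorm : I.Normalized) (hmin : I.Minimal)
    (ρ : ℝ) (hρpos : 0 < ρ) (hρroot : Pm I.m ρ = 0) :
    I.ratio ≤ ρ := by
  obtain ⟨hopt, hs, htn⟩ := hnorm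
  rw [SchedInstance.ratio, hopt, div_one]
  refine le_of_Pm_nonpos I.hm hρpos hρroot ?_
  obtain ⟨k, hk, hkm, hPk⟩ : ∃ k, 1 ≤ k ∧ k ≤ I.m ∧ Pm k I.lptTime ≤ 0 := by
    by_cases hc : I.lptTime ≤ 1
    · exact ⟨1, le_rfl, I.hm, by rw [Pm_one]; linarith⟩
    have hn2 : 2 ≤ I.n := by have := I.hm; omega
    have hm : I.n - 1 = I.m := by omega
    refine I.exists_Pm_nonpos hn hopt htn (by linarith) (fun p hp => ?_) fun p hp => ?_
    · have := SchedInstance.lptTime_le_cost_last hmin hn2 hp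
      rwa [SchedInstance.cost, hm, htn, le_div_iff₀ (I.s_pos hp)] at this
    · exact hm ▸ SchedInstance.lptW_pos_of_minimal hmin hs hn2 (by linarith) hp
  exact Pm_nonpos_of_le hk hkm (I.makespan_nonneg _) hPk
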